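/- arXiv:1706.09696 — 3 statements merged into one kernel-verified Lean document; each statement's English description precedes it below -/
import Mathlib

section
/- For every function f : ℕ → ℕ there exists an injective 'representation' r : ℕ → ℕ such that the represented function r ∘ f ∘ r⁻¹ (defined on the range of r) extends to a computable function on ℕ. In particular, every function on a countable set is computable under some choice of representation. -/
namespace EFCRep

open Function

/-- Universal computable step function. A code `z` represents
`(c, B, L, i, t)` (nested `Nat.pair`s): component id `c`, wrap-back point `B`,
pre-period-plus-period length `L`, core index `i`, history-list code `t`. -/
def hstep (z : ℕ) : ℕ :=
  Nat.pair z.unpair.1 <|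
  Nat.pair z.unpair.2.unpair.1 <|
  Nat.pair z.unpair.2.unpair.2.unpair.1 <|
  if z.unpair.2.unpair.2.unpair.2.unpair.2 = 0 then
    Nat.pair
      (if z.unpair.2.unpair.2.unpair.2.unpair.1 + 1 = z.unpair.2.unpair.2.unpair.1
       then z.unpair.2.unpair.1
       else z.unpair.2.unpair.2.unpair.2.unpair.1 + 1) 0
  else
    Nat.pair z.unpair.2.unpair.2.unpair.2.unpair.1
      ((z.unpair.2.unpair.2.unpair.2.unpair.2 - 1).unpair.2)

lemma hstep_primrec : Primrec hstep := by
  have u1 : Primrec (fun z : ℕ => z.unpair.1) := Primrec.fst.comp Primrec.unpair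
  have u2 : Primrec (fun z : ℕ => z.unpair.2) := Primrec.snd.comp Primrec.unpair
  have r1 : Primrec (fun z : ℕ => z.unpair.2.unpair.1) := u1.comp u2
  have w2 : Primrec (fun z : ℕ => z.unpair.2.unpair.2) := u2.comp u2
  have r2 : Primrec (fun z : ℕ => z.unpair.2.unpair.2.unpair.1) := u1.comp w2
  have w3 : Primrec (fun z : ℕ => z.unpair.2.unpair.2.unpair.2) := u2.comp w2
  have iP : Primrec (fun z : ℕ => z.unpair.2.unpair.2.unpair.2.unpair.1) := u1.comp w3
  have tP : Primrec (fun z : ℕ => z.unpair.2.unpair.2.unpair.2.unpair.2) := u2.comp w3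
  have hc1 : PrimrecPred (fun z : ℕ => z.unpair.2.unpair.2.unpair.2.unpair.2 = 0) :=
    (PrimrecRel.comp Primrec.eq tP (Primrec.const 0))
  have hc2 : PrimrecPred (fun z : ℕ =>
      z.unpair.2.unpair.2.unpair.2.unpair.1 + 1 = z.unpair.2.unpair.2.unpair.1) :=
    (PrimrecRel.comp Primrec.eq (Primrec.succ.comp iP) r2)
  have inner1 : Primrec (fun z : ℕ =>
      (if z.unpair.2.unpair.2.unpair.2.unpair.1 + 1 = z.unpair.2.unpair.2.unpair.1
       then z.unpair.2.unpair.1 else z.unpair.2.unpair.2.unpair.2.unpair.1 + 1)) :=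
    Primrec.ite hc2 r1 (Primrec.succ.comp iP)
  have branch1 : Primrec (fun z : ℕ => Nat.pair
      (if z.unpair.2.unpair.2.unpair.2.unpair.1 + 1 = z.unpair.2.unpair.2.unpair.1
       then z.unpair.2.unpair.1 else z.unpair.2.unpair.2.unpair.2.unpair.1 + 1) 0) :=
    Primrec₂.natPair.comp inner1 (Primrec.const 0)
  have tail : Primrec (fun z : ℕ => ((z.unpair.2.unpair.2.unpair.2.unpair.2 - 1)).unpair.2) :=
    u2.comp (Primrec.nat_sub.comp tP (Primrec.const 1))
  have branch2 : Primrec (fun z : ℕ => Nat.pair z.unpair.2.unpair.2.unpair.2.unpair.1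
      ((z.unpair.2.unpair.2.unpair.2.unpair.2 - 1)).unpair.2) :=
    Primrec₂.natPair.comp iP tail
  have inner : Primrec (fun z : ℕ =>
      if z.unpair.2.unpair.2.unpair.2.unpair.2 = 0 then
        Nat.pair (if z.unpair.2.unpair.2.unpair.2.unpair.1 + 1 = z.unpair.2.unpair.2.unpair.1
          then z.unpair.2.unpair.1 else z.unpair.2.unpair.2.unpair.2.unpair.1 + 1) 0
      else Nat.pair z.unpair.2.unpair.2.unpair.2.unpair.1
        ((z.unpair.2.unpair.2.unpair.2.unpair.2 - 1)).unpair.2) :=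
    Primrec.ite hc1 branch1 branch2
  exact Primrec₂.natPair.comp u1 <| Primrec₂.natPair.comp r1 <|
    Primrec₂.natPair.comp r2 inner

variable (f : ℕ → ℕ)

/-- least element of the weakly connected component of `x` in the graph of `f`. -/
noncomputable def cm (x : ℕ) : ℕ := sInf {y | ∃ a b, f^[a] x = f^[b] y}

/-- first time the orbit of `m` revisits an earlier value. -/
noncomputable def Lv (m : ℕ) : ℕ := sInf {n | ∃ j, j < n ∧ f^[j] m = f^[n] m}

/-- the earlier time revisited at time `Lv`. -/
noncomputable def Bv (m : ℕ) : ℕ := sInf {j | j < Lv f m ∧ f^[j] m = f^[Lv f m] m}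

/-- distance from `x` to the forward orbit of `cm f x`. -/
noncomputable def dv (x : ℕ) : ℕ := sInf {a | ∃ j, f^[j] (cm f x) = f^[a] x}

/-- index in the orbit of `cm f x` of the landing point of `x`. -/
noncomputable def iv (x : ℕ) : ℕ := sInf {j | f^[j] (cm f x) = f^[dv f x] x}

/-- code of the history list `[x, f x, …, f^[a-1] x]`. -/
def tc : ℕ → ℕ → ℕ
  | _, 0 => 0
  | x, (a+1) => Nat.pair x (tc (f x) a) + 1

/-- the representation. -/
noncomputable def rf (x : ℕ) : ℕ :=
  Nat.pair (cm f x) <| Nat.pair (Bv f (cm f x)) <| Nat.pair (Lv f (cm f x)) <|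
    Nat.pair (iv f x) (tc f x (dv f x))

lemma cm_f (x : ℕ) : cm f (f x) = cm f x := by
  unfold cm
  congr 1
  ext y
  constructor
  · rintro ⟨a, b, h⟩
    exact ⟨a + 1, b, by rwa [Function.iterate_succ_apply]⟩
  · rintro ⟨a, b, h⟩
    refine ⟨a, b + 1, ?_⟩
    rw [← Function.iterate_succ_apply, Function.iterate_succ_apply',
      Function.iterate_succ_apply', h]

lemma cm_spec (x : ℕ) : ∃ a b, f^[a] x = f^[b] (cm f x) :=
  Nat.sInf_mem (⟨x, 0, 0, rfl⟩ : Set.Nonempty {y | ∃ a b, f^[a] x = f^[b] y})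

lemma dvS_nonempty (x : ℕ) : Set.Nonempty {a | ∃ j, f^[j] (cm f x) = f^[a] x} := by
  obtain ⟨a, b, h⟩ := cm_spec f x
  exact ⟨a, b, h.symm⟩

lemma dv_spec (x : ℕ) : f^[iv f x] (cm f x) = f^[dv f x] x := by
  have h1 : ∃ j, f^[j] (cm f x) = f^[dv f x] x := Nat.sInf_mem (dvS_nonempty f x)
  exact Nat.sInf_mem h1

lemma lv_ne (m : ℕ) {a b : ℕ} (hab : a < b) (hb : b < Lv f m) :
    f^[a] m ≠ f^[b] m := by
  intro h
  have : Lv f m ≤ b := Nat.sInf_le ⟨a, hab, h⟩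
  omega

lemma lv_zero_ne (m : ℕ) (h0 : Lv f m = 0) {a b : ℕ} (hab : a < b) :
    f^[a] m ≠ f^[b] m := by
  intro h
  have hne : Set.Nonempty {n | ∃ j, j < n ∧ f^[j] m = f^[n] m} := ⟨b, a, hab, h⟩
  have := Nat.sInf_mem hne
  rw [show sInf {n | ∃ j, j < n ∧ f^[j] m = f^[n] m} = Lv f m from rfl, h0] at this
  obtain ⟨j, hj, -⟩ := this
  exact absurd hj (Nat.not_lt_zero j)

lemma bv_spec (m : ℕ) (hL : 0 < Lv f m) :
    Bv f m < Lv f m ∧ f^[Bv f m] m = f^[Lv f m] m := by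
  have hne : Set.Nonempty {n | ∃ j, j < n ∧ f^[j] m = f^[n] m} :=
    Nat.nonempty_of_pos_sInf hL
  have hmem : ∃ j, j < Lv f m ∧ f^[j] m = f^[Lv f m] m := Nat.sInf_mem hne
  exact Nat.sInf_mem hmem

lemma orbit_reduce (m : ℕ) (hL : 0 < Lv f m) :
    ∀ j, ∃ j', j' < Lv f m ∧ f^[j'] m = f^[j] m := by
  intro j
  induction j using Nat.strong_induction_on with
  | _ j ih =>
    rcases lt_or_ge j (Lv f m) with h | h
    · exact ⟨j, h, rfl⟩
    · obtain ⟨hBlt, hBeq⟩ := bv_spec f m hL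
      have key : f^[j] m = f^[j - Lv f m + Bv f m] m := by
        have : f^[j] m = f^[j - Lv f m] (f^[Lv f m] m) := by
          rw [← Function.iterate_add_apply]
          congr 1
          omega
        rw [this, ← hBeq, ← Function.iterate_add_apply]
      have hlt : j - Lv f m + Bv f m < j := by omega
      obtain ⟨j', hj', he⟩ := ih _ hlt
      exact ⟨j', hj', by rw [he, ← key]⟩

lemma sInf_lt_lv (m : ℕ) (hL : 0 < Lv f m) {y : ℕ} (hy : ∃ j, f^[j] m = y) :
    sInf {j | f^[j] m = y} < Lv f m := by
  have hs : f^[sInf {j | f^[j] m = y}] m = y := Nat.sInf_mem hy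
  obtain ⟨j', hj', he⟩ := orbit_reduce f m hL (sInf {j | f^[j] m = y})
  have : j' ∈ {j | f^[j] m = y} := by rw [Set.mem_setOf_eq, he, hs]
  exact lt_of_le_of_lt (Nat.sInf_le this) hj'

lemma dv_f_of_pos (x : ℕ) {a : ℕ} (h : dv f x = a + 1) : dv f (f x) = a := by
  have hmem : ∀ b, (∃ j, f^[j] (cm f (f x)) = f^[b] (f x)) ↔
      (∃ j, f^[j] (cm f x) = f^[b+1] x) := by
    intro b
    rw [cm_f, Function.iterate_succ_apply]
  have hS : dv f x ∈ {a | ∃ j, f^[j] (cm f x) = f^[a] x} := Nat.sInf_mem (dvS_nonempty f x)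
  rw [h] at hS
  have ha : a ∈ {b | ∃ j, f^[j] (cm f (f x)) = f^[b] (f x)} := (hmem a).mpr hS
  refine le_antisymm (Nat.sInf_le ha) ?_
  by_contra hlt
  push_neg at hlt
  have hmem2 : dv f (f x) ∈ {b | ∃ j, f^[j] (cm f (f x)) = f^[b] (f x)} :=
    Nat.sInf_mem ⟨a, ha⟩
  have hle : dv f x ≤ dv f (f x) + 1 := Nat.sInf_le ((hmem _).mp hmem2)
  omega

lemma iv_f_of_pos (x : ℕ) {a : ℕ} (h : dv f x = a + 1) : iv f (f x) = iv f x := by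
  unfold iv
  congr 1
  ext j
  rw [cm_f, dv_f_of_pos f x h, Set.mem_setOf_eq, Set.mem_setOf_eq,
    ← Function.iterate_succ_apply, Nat.succ_eq_add_one, ← h]

lemma dv_zero_spec (x : ℕ) (h : dv f x = 0) : f^[iv f x] (cm f x) = x := by
  have := dv_spec f x
  rwa [h, Function.iterate_zero_apply] at this

lemma dv_f_of_zero (x : ℕ) (h : dv f x = 0) : dv f (f x) = 0 := by
  have hx := dv_zero_spec f x h
  apply Nat.sInf_eq_zero.mpr
  left
  refine ⟨iv f x + 1, ?_⟩
  rw [Function.iterate_zero_apply, Function.iterate_succ_apply', cm_f, hx]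

lemma iv_f_of_zero (x : ℕ) (h : dv f x = 0) :
    iv f (f x) = if iv f x + 1 = Lv f (cm f x) then Bv f (cm f x) else iv f x + 1 := by
  set m := cm f x with hm
  have hx := dv_zero_spec f x h
  have hT : iv f (f x) = sInf {j | f^[j] m = f x} := by
    unfold iv
    congr 1
    ext j
    rw [cm_f, ← hm, dv_f_of_zero f x h, Set.mem_setOf_eq, Set.mem_setOf_eq,
      Function.iterate_zero_apply]
  have hmemT : f^[iv f x + 1] m = f x := by
    rw [Function.iterate_succ_apply', hx]
  have hiv : iv f x = sInf {j | f^[j] m = x} := by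
    unfold iv
    congr 1
    ext j
    rw [← hm, h, Set.mem_setOf_eq, Set.mem_setOf_eq, Function.iterate_zero_apply]
  have hneT : Set.Nonempty {j | f^[j] m = f x} := ⟨iv f x + 1, hmemT⟩
  have hmem2 : f^[iv f (f x)] m = f x := by
    rw [hT]; exact Nat.sInf_mem hneT
  rcases Nat.eq_zero_or_pos (Lv f m) with hL | hL
  · rw [if_neg (by omega)]
    refine le_antisymm (by rw [hT]; exact Nat.sInf_le hmemT) ?_
    by_contra hlt
    push_neg at hlt
    exact lv_zero_ne f m hL hlt (hmem2.trans hmemT.symm)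
  · have hjlt : iv f x < Lv f m := by
      rw [hiv]
      exact sInf_lt_lv f m hL ⟨iv f x, hx⟩
    rcases eq_or_ne (iv f x + 1) (Lv f m) with he | hne
    · rw [if_pos he]
      obtain ⟨hBlt, hBeq⟩ := bv_spec f m hL
      have hBT : f^[Bv f m] m = f x := by rw [hBeq, ← he, hmemT]
      refine le_antisymm (by rw [hT]; exact Nat.sInf_le hBT) ?_
      by_contra hlt
      push_neg at hlt
      exact lv_ne f m hlt hBlt (hmem2.trans hBT.symm)
    · rw [if_neg hne]
      have hlt2 : iv f x + 1 < Lv f m := by omega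
      refine le_antisymm (by rw [hT]; exact Nat.sInf_le hmemT) ?_
      by_contra hlt
      push_neg at hlt
      exact lv_ne f m hlt hlt2 (hmem2.trans hmemT.symm)

lemma rf_injective : Function.Injective (rf f) := by
  intro x y hxy
  unfold rf at hxy
  rw [Nat.pair_eq_pair] at hxy
  obtain ⟨hc, hxy⟩ := hxy
  rw [Nat.pair_eq_pair] at hxy
  obtain ⟨hB, hxy⟩ := hxy
  rw [Nat.pair_eq_pair] at hxy
  obtain ⟨hL, hxy⟩ := hxy
  rw [Nat.pair_eq_pair] at hxy
  obtain ⟨hi, ht⟩ := hxy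
  rcases hdx : dv f x with _ | a <;> rcases hdy : dv f y with _ | b
  · have h1 := dv_zero_spec f x hdx
    have h2 := dv_zero_spec f y hdy
    rw [← h1, ← h2, hc, hi]
  · rw [hdx, hdy] at ht
    simp [tc] at ht
  · rw [hdx, hdy] at ht
    simp [tc] at ht
  · rw [hdx, hdy] at ht
    simp only [tc, Nat.add_right_cancel_iff, Nat.pair_eq_pair] at ht
    exact ht.1

theorem main (x : ℕ) : hstep (rf f x) = rf f (f x) := by
  rcases hdx : dv f x with _ | a
  · have hd' := dv_f_of_zero f x hdx
    have hi' := iv_f_of_zero f x hdx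
    simp [hstep, rf, Nat.unpair_pair, cm_f, hdx, hd', hi', tc]
  · have hd' := dv_f_of_pos f x hdx
    have hi' := iv_f_of_pos f x hdx
    simp [hstep, rf, Nat.unpair_pair, cm_f, hdx, hd', hi', tc]

end EFCRep

/-- For every function `f : ℕ → ℕ` there is an injective representation
`r : ℕ → ℕ` in which `f` becomes computable: some total computable `h`
satisfies `h (r n) = r (f n)` for all `n`. -/
theorem every_function_computable_in_some_representation (f : ℕ → ℕ) :
    ∃ r : ℕ → ℕ, Function.Injective r ∧
      ∃ h : ℕ → ℕ, Computable h ∧ ∀ n : ℕ, h (r n) = r (f n) := by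
  exact ⟨EFCRep.rf f, EFCRep.rf_injective f, EFCRep.hstep,
    (EFCRep.hstep_primrec).to_comp, fun n => EFCRep.main f n⟩
end

section
/- Computational strength of representations reduces to endorepresentations: for representations x, y of A, x is computationally stronger than y (every function f : A → A computable in y is computable in x) if and only if the endorepresentation x ∘ y⁻¹ : y(A) → ℕ is computationally stronger than the identity representation of y(A). -/
/-- `f : α → α` is computable in the representation `r : α → ℕ` if some total
computable function on `ℕ` realizes it through `r`. -/
def CompIn {α : Type} (r : α → ℕ) (f : α → α) : Prop :=
  ∃ h : ℕ → ℕ, Computable h ∧ ∀ a : α, h (r a) = r (f a)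

/-- `x` is computationally stronger than `y` iff the endorepresentation
`x ∘ y⁻¹` of `y(A)` is computationally stronger than the identity
representation of `y(A)`. -/
theorem stronger_iff_endorepresentation_stronger {A : Type} (x y : A → ℕ)
    (hx : Function.Injective x) (hy : Function.Injective y)
    (e : Set.range y → ℕ) (he : ∀ a : A, e ⟨y a, ⟨a, rfl⟩⟩ = x a) :
    (∀ f : A → A, CompIn y f → CompIn x f) ↔
      (∀ g : Set.range y → Set.range y,
        CompIn (Subtype.val : Set.range y → ℕ) g → CompIn e g) := by
  constructor
  · intro H g hgc
    obtain ⟨h, hc, hg⟩ := hgc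
    set f : A → A := fun a => (g ⟨y a, ⟨a, rfl⟩⟩).2.choose with hfdef
    have hyf : ∀ a, y (f a) = (g ⟨y a, ⟨a, rfl⟩⟩).val :=
      fun a => (g ⟨y a, ⟨a, rfl⟩⟩).2.choose_spec
    obtain ⟨h', hc', hx'⟩ := H f ⟨h, hc, fun a => by rw [hyf a]; exact hg ⟨y a, ⟨a, rfl⟩⟩⟩
    refine ⟨h', hc', ?_⟩
    rintro ⟨_, a, rfl⟩
    rw [he, hx' a, ← he (f a)]
    congr 1
    exact Subtype.ext (hyf a)
  · intro H f hfc
    obtain ⟨h, hc, hf⟩ := hfc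
    set g : Set.range y → Set.range y := fun b => ⟨y (f b.2.choose), ⟨_, rfl⟩⟩ with hgdef
    have hgy : ∀ a, g ⟨y a, ⟨a, rfl⟩⟩ = ⟨y (f a), ⟨_, rfl⟩⟩ := by
      intro a
      apply Subtype.ext
      have hch : (⟨y a, ⟨a, rfl⟩⟩ : Set.range y).2.choose = a :=
        hy (⟨y a, ⟨a, rfl⟩⟩ : Set.range y).2.choose_spec
      simp only [hgdef, hch]
    have hcomp : CompIn (Subtype.val : Set.range y → ℕ) g := by
      refine ⟨h, hc, ?_⟩
      rintro ⟨_, a, rfl⟩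
      rw [hgy a]; exact hf a
    obtain ⟨h', hc', he'⟩ := H g hcomp
    refine ⟨h', hc', fun a => ?_⟩
    rw [← he a, he' ⟨y a, ⟨a, rfl⟩⟩, hgy a, he]
end

section
/- The class of functions computable in representation u^(k) is not contained in the functions computable with oracle ∅^(k−1): the characteristic function χ^(k) of ∅^(k) is computable in representation u^(k) but is not ∅^(k−1)-computable. -/
open scoped Classical

/-- Codes for oracle machines: Mathlib's `Nat.Partrec.Code` with an extra
constructor for the oracle. -/
inductive OCode : Type
  | zero : OCode
  | succ : OCode
  | left : OCode
  | right : OCode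
  | oracle : OCode
  | pair : OCode → OCode → OCode
  | comp : OCode → OCode → OCode
  | prec : OCode → OCode → OCode
  | rfind' : OCode → OCode

/-- Evaluation of an oracle-machine code relative to an oracle `O`. -/
def evalo (O : ℕ →. ℕ) : OCode → ℕ →. ℕ
  | .zero => fun _ => Part.some 0
  | .succ => fun n => Part.some (n + 1)
  | .left => fun n => Part.some n.unpair.1
  | .right => fun n => Part.some n.unpair.2
  | .oracle => O
  | .pair cf cg => fun n => Nat.pair <$> evalo O cf n <*> evalo O cg n
  | .comp cf cg => fun n => evalo O cg n >>= evalo O cf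
  | .prec cf cg =>
    Nat.unpaired fun a n =>
      n.rec (evalo O cf a) fun y IH => do
        let i ← IH
        evalo O cg (Nat.pair a (Nat.pair y i))
  | .rfind' cf =>
    Nat.unpaired fun a m =>
      (Nat.rfind fun n => (fun m => m = 0) <$> evalo O cf (Nat.pair a (n + m))).map (· + m)

/-- A standard (surjective) numbering of oracle-machine codes. -/
def ofNatOCode : ℕ → OCode
  | 0 => .zero
  | 1 => .succ
  | 2 => .left
  | 3 => .right
  | 4 => .oracle
  | n + 5 =>
    let m := n.div2.div2
    have hm : m < n + 5 := by
      simp only [m, Nat.div2_val]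
      exact
        lt_of_le_of_lt (le_trans (Nat.div_le_self _ _) (Nat.div_le_self _ _))
          (Nat.succ_le_succ (Nat.le_add_right _ _))
    have _m1 : m.unpair.1 < n + 5 := lt_of_le_of_lt m.unpair_left_le hm
    have _m2 : m.unpair.2 < n + 5 := lt_of_le_of_lt m.unpair_right_le hm
    match n.bodd, n.div2.bodd with
    | false, false => .pair (ofNatOCode m.unpair.1) (ofNatOCode m.unpair.2)
    | false, true => .comp (ofNatOCode m.unpair.1) (ofNatOCode m.unpair.2)
    | true, false => .prec (ofNatOCode m.unpair.1) (ofNatOCode m.unpair.2)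
    | true, true => .rfind' (ofNatOCode m)
decreasing_by all_goals first | exact _m1 | exact _m2 | exact hm

/-- The characteristic (oracle) function of a set `C ⊆ ℕ`. -/
noncomputable def chi (C : Set ℕ) : ℕ →. ℕ :=
  fun n => Part.some (if n ∈ C then 1 else 0)

/-- The Turing jump of a set `C ⊆ ℕ`. -/
noncomputable def jumpSet (C : Set ℕ) : Set ℕ :=
  { n : ℕ | (evalo (chi C) (ofNatOCode n) n).Dom }

/-- The `k`-th Turing jump `∅^(k)` of the empty set. -/
noncomputable def emptyJump : ℕ → Set ℕ
  | 0 => ∅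
  | k + 1 => jumpSet (emptyJump k)

/-- The characteristic function (with values in `ℕ`) of a set `S ⊆ ℕ`. -/
noncomputable def chiNat (S : Set ℕ) : ℕ → ℕ :=
  fun n => if n ∈ S then 1 else 0

/-- The representation `u^(k)(n) = ⟨χ^(k)(n), …, χ'(n), n⟩`. -/
noncomputable def uRep : ℕ → ℕ → ℕ
  | 0, n => n
  | k + 1, n => Nat.pair (chiNat (emptyJump (k + 1)) n) (uRep k n)

/-- Partial functions computable relative to an oracle `O : ℕ →. ℕ`. -/
inductive RecursiveInO (O : ℕ →. ℕ) : (ℕ →. ℕ) → Prop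
  | zero : RecursiveInO O fun _ => Part.some 0
  | succ : RecursiveInO O fun n => Part.some (n + 1)
  | left : RecursiveInO O fun n => Part.some n.unpair.1
  | right : RecursiveInO O fun n => Part.some n.unpair.2
  | oracle : RecursiveInO O O
  | pair {f g : ℕ →. ℕ} : RecursiveInO O f → RecursiveInO O g →
      RecursiveInO O fun n => Nat.pair <$> f n <*> g n
  | comp {f g : ℕ →. ℕ} : RecursiveInO O f → RecursiveInO O g →
      RecursiveInO O fun n => g n >>= f
  | prec {f g : ℕ →. ℕ} : RecursiveInO O f → RecursiveInO O g →
      RecursiveInO O (Nat.unpaired fun a n =>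
        n.rec (f a) fun y IH => do let i ← IH; g (Nat.pair a (Nat.pair y i)))
  | rfind {f : ℕ →. ℕ} : RecursiveInO O f →
      RecursiveInO O fun a =>
        Nat.rfind fun n => (fun m => m = 0) <$> f (Nat.pair a n)

/-! The first component of `u^(k)(n)` is `χ^(k)(n)`, and
`u^(k)` of a bit is a constant, so a map looking only at that component realises `χ^(k)`.
The oracle part is Turing's diagonal argument relativised to `C = ∅^(k-1)`: if `χ_{C'}` were
`C`-computable, so would be a machine halting exactly off `C'`, and its own index lies in `C'`
iff it does not. -/

def encOCode : OCode → ℕ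
  | .zero => 0
  | .succ => 1
  | .left => 2
  | .right => 3
  | .oracle => 4
  | .pair cf cg => 2 * (2 * Nat.pair (encOCode cf) (encOCode cg)) + 5
  | .comp cf cg => 2 * (2 * Nat.pair (encOCode cf) (encOCode cg) + 1) + 5
  | .prec cf cg => (2 * (2 * Nat.pair (encOCode cf) (encOCode cg)) + 1) + 5
  | .rfind' cf => (2 * (2 * encOCode cf + 1) + 1) + 5

theorem ofNatOCode_encOCode (c : OCode) : ofNatOCode (encOCode c) = c := by
  induction c <;> simp [encOCode, ofNatOCode, Nat.div2_val, *]

theorem RecursiveInO.exists_evalo_eq {O f : ℕ →. ℕ} (h : RecursiveInO O f) :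
    ∃ c : OCode, evalo O c = f := by
  induction h with
  | zero => exact ⟨.zero, rfl⟩
  | succ => exact ⟨.succ, rfl⟩
  | left => exact ⟨.left, rfl⟩
  | right => exact ⟨.right, rfl⟩
  | oracle => exact ⟨.oracle, rfl⟩
  | pair _ _ ihf ihg =>
    obtain ⟨cf, rfl⟩ := ihf
    obtain ⟨cg, rfl⟩ := ihg
    exact ⟨.pair cf cg, rfl⟩
  | comp _ _ ihf ihg =>
    obtain ⟨cf, rfl⟩ := ihf
    obtain ⟨cg, rfl⟩ := ihg
    exact ⟨.comp cf cg, rfl⟩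
  | prec _ _ ihf ihg =>
    obtain ⟨cf, rfl⟩ := ihf
    obtain ⟨cg, rfl⟩ := ihg
    exact ⟨.prec cf cg, rfl⟩
  | rfind _ ihf =>
    obtain ⟨cf, rfl⟩ := ihf
    -- `rfind' cf` searches from the offset `m` in `⟨a, m⟩`; feed it `⟨a, 0⟩`.
    refine ⟨.comp (.rfind' cf) (.pair (.pair .left .right) .zero), funext fun a => ?_⟩
    simp only [evalo, Seq.seq, Part.bind_some, Part.map_eq_map, Part.bind_map]
    simp [Nat.unpaired, Nat.unpair_pair, Part.map_id']

theorem chiNat_eq_zero_iff {S : Set ℕ} {a : ℕ} : chiNat S a = 0 ↔ a ∉ S := by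
  by_cases h : a ∈ S <;> simp [chiNat, h]

theorem chiNat_eq_one_iff {S : Set ℕ} {a : ℕ} : chiNat S a = 1 ↔ a ∈ S := by
  by_cases h : a ∈ S <;> simp [chiNat, h]

theorem exists_evalo_dom_iff_notMem {O : ℕ →. ℕ} {S : Set ℕ}
    (h : RecursiveInO O fun n => Part.some (chiNat S n)) :
    ∃ c : OCode, ∀ a, (evalo O c a).Dom ↔ a ∉ S := by
  obtain ⟨c, hc⟩ := (RecursiveInO.rfind (RecursiveInO.comp h RecursiveInO.left)).exists_evalo_eq
  refine ⟨c, fun a => ?_⟩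
  simp only [hc, Nat.unpair_pair, Part.bind_eq_bind, Part.map_eq_map, Part.bind_some,
    Part.map_some]
  refine Nat.rfind_dom.trans ?_
  rw [← chiNat_eq_zero_iff]
  constructor
  · rintro ⟨n, hn, -⟩
    simpa using hn
  · intro ha
    exact ⟨0, by simpa using ha, fun {m} hm => absurd hm (Nat.not_lt_zero m)⟩

theorem not_recursiveInO_chiNat_jumpSet (C : Set ℕ) :
    ¬ RecursiveInO (chi C) fun n => Part.some (chiNat (jumpSet C) n) := by
  intro h
  obtain ⟨c, hc⟩ := exists_evalo_dom_iff_notMem h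
  have hdiag := hc (encOCode c)
  rw [← congrArg (evalo (chi C) · (encOCode c)) (ofNatOCode_encOCode c)] at hdiag
  exact (iff_not_self hdiag).elim

theorem unpair_uRep_succ_fst (k n : ℕ) :
    (uRep (k + 1) n).unpair.1 = chiNat (emptyJump (k + 1)) n := by
  simp [uRep]

/-- The characteristic function `χ^(k)` of `∅^(k)` is computable in the
representation `u^(k)` but not computable with oracle `∅^(k-1)`; hence the
functions computable in `u^(k)` are not contained in the `∅^(k-1)`-computable
ones. -/
theorem uRep_exceeds_previous_jump (k : ℕ) (hk : 1 ≤ k) :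
    (∃ h : ℕ → ℕ, Computable h ∧
        ∀ n : ℕ, h (uRep k n) = uRep k (chiNat (emptyJump k) n)) ∧
    ¬ RecursiveInO (chi (emptyJump (k - 1)))
        (fun n => Part.some (chiNat (emptyJump k) n)) := by
  obtain ⟨j, rfl⟩ : ∃ j, k = j + 1 := ⟨k - 1, (Nat.succ_pred_eq_of_pos hk).symm⟩
  refine ⟨⟨fun m => if m.unpair.1 = 1 then uRep (j + 1) 1 else uRep (j + 1) 0, ?_, ?_⟩,
    not_recursiveInO_chiNat_jumpSet (emptyJump j)⟩
  · exact (Primrec.ite (Primrec.eq.comp (Primrec.fst.comp Primrec.unpair) (Primrec.const 1))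
      (Primrec.const _) (Primrec.const _)).to_comp
  · intro n
    simp only [unpair_uRep_succ_fst]
    by_cases hn : n ∈ emptyJump (j + 1)
    · simp [chiNat_eq_one_iff.mpr hn]
    · simp [chiNat_eq_zero_iff.mpr hn]
end
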